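/- arXiv:2202.11959 — 3 statements merged into one kernel-verified Lean document; each statement's English description precedes it below -/
import Mathlib

section
/- Let n ≥ 1, let θ, μ, κ ∈ ℝⁿ, and let D be a symmetric 2n×2n real matrix with block form D = [[Dᶜᶜ, Dᶜˢ],[(Dᶜˢ)ᵀ, Dˢˢ]] where each of the n×n blocks Dᶜᶜ, Dˢˢ, Dᶜˢ has all diagonal entries equal to zero. Define η = [κ⊙c(μ); κ⊙s(μ)] ∈ ℝ²ⁿ and the symmetric 2n×2n matrix E = [[Eᶜᶜ, Eᶜˢ],[(Eᶜˢ)ᵀ, Eˢˢ]] with blocks Eᶜᶜ = ½Dᶜᶜ⊙c(μ)c(μ)ᵀ − ½Dᶜˢ⊙c(μ)s(μ)ᵀ + ½Dˢˢ⊙s(μ)s(μ)ᵀ − ½(Dᶜˢ)ᵀ⊙s(μ)c(μ)ᵀ, Eᶜˢ = ½Dᶜˢ⊙c(μ)c(μ)ᵀ + ½Dᶜᶜ⊙c(μ)s(μ)ᵀ − ½Dˢˢ⊙s(μ)c(μ)ᵀ − ½(Dᶜˢ)ᵀ⊙s(μ)s(μ)ᵀ, and Eˢˢ = ½Dˢˢ⊙c(μ)c(μ)ᵀ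 + ½Dᶜᶜ⊙s(μ)s(μ)ᵀ + ½Dᶜˢ⊙s(μ)c(μ)ᵀ + ½(Dᶜˢ)ᵀ⊙c(μ)s(μ)ᵀ. Then for all θ ∈ ℝⁿ the identity κᵀc(θ−μ) + ½·v(θ−μ)ᵀ D v(θ−μ) = ηᵀv(θ) + v(θ)ᵀ E v(θ) holds, i.e. the exponent of the extended multivariate von Mises density equals the exponent of its exponential-family reparametrization with canonical parameters (η, E). -/
open Matrix Real

/-- The exponent of the extended multivariate von Mises density equals the exponent of its
exponential-family reparametrization with canonical parameters `(η, E)`. Vectors in `ℝ²ⁿ`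
are indexed by `Fin n ⊕ Fin n` (cosine block first, then sine block), `v(x) = [c(x); s(x)]`,
and block matrices are built with `Matrix.fromBlocks`. -/
theorem stmt_1 (n : ℕ) (hn : 1 ≤ n) (μ κ : Fin n → ℝ)
    (Dcc Dss Dcs : Matrix (Fin n) (Fin n) ℝ)
    (hDccSymm : Dcc.IsSymm) (hDssSymm : Dss.IsSymm)
    (hDccDiag : ∀ i, Dcc i i = 0) (hDssDiag : ∀ i, Dss i i = 0)
    (hDcsDiag : ∀ i, Dcs i i = 0)
    (D : Matrix (Fin n ⊕ Fin n) (Fin n ⊕ Fin n) ℝ)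
    (hD : D = Matrix.fromBlocks Dcc Dcs Dcsᵀ Dss)
    (cμ sμ : Fin n → ℝ)
    (hcμ : cμ = fun i => Real.cos (μ i)) (hsμ : sμ = fun i => Real.sin (μ i))
    (η : Fin n ⊕ Fin n → ℝ)
    (hη : η = Sum.elim (fun i => κ i * cμ i) (fun i => κ i * sμ i))
    (Ecc Ecs Ess : Matrix (Fin n) (Fin n) ℝ)
    (hEcc : Ecc = (1/2 : ℝ) • (Dcc.hadamard (vecMulVec cμ cμ))
      - (1/2 : ℝ) • (Dcs.hadamard (vecMulVec cμ sμ))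
      + (1/2 : ℝ) • (Dss.hadamard (vecMulVec sμ sμ))
      - (1/2 : ℝ) • (Dcsᵀ.hadamard (vecMulVec sμ cμ)))
    (hEcs : Ecs = (1/2 : ℝ) • (Dcs.hadamard (vecMulVec cμ cμ))
      + (1/2 : ℝ) • (Dcc.hadamard (vecMulVec cμ sμ))
      - (1/2 : ℝ) • (Dss.hadamard (vecMulVec sμ cμ))
      - (1/2 : ℝ) • (Dcsᵀ.hadamard (vecMulVec sμ sμ)))
    (hEss : Ess = (1/2 : ℝ) • (Dss.hadamard (vecMulVec cμ cμ))
      + (1/2 : ℝ) • (Dcc.hadamard (vecMulVec sμ sμ))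
      + (1/2 : ℝ) • (Dcs.hadamard (vecMulVec sμ cμ))
      + (1/2 : ℝ) • (Dcsᵀ.hadamard (vecMulVec cμ sμ)))
    (E : Matrix (Fin n ⊕ Fin n) (Fin n ⊕ Fin n) ℝ)
    (hE : E = Matrix.fromBlocks Ecc Ecs Ecsᵀ Ess) :
    ∀ θ : Fin n → ℝ,
      κ ⬝ᵥ (fun i => Real.cos (θ i - μ i)) +
        (1/2 : ℝ) *
          ((Sum.elim (fun i => Real.cos (θ i - μ i)) (fun i => Real.sin (θ i - μ i))) ⬝ᵥ
            (D *ᵥ Sum.elim (fun i => Real.cos (θ i - μ i)) (fun i => Real.sin (θ i - μ i)))) =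
      η ⬝ᵥ (Sum.elim (fun i => Real.cos (θ i)) (fun i => Real.sin (θ i))) +
        (Sum.elim (fun i => Real.cos (θ i)) (fun i => Real.sin (θ i))) ⬝ᵥ
          (E *ᵥ Sum.elim (fun i => Real.cos (θ i)) (fun i => Real.sin (θ i))) := by

  intro θ
  subst hD hcμ hsμ hη hEcc hEcs hEss hE
  simp only [dotProduct, Matrix.mulVec, Fintype.sum_sum_type, Sum.elim_inl,
    Sum.elim_inr, Matrix.fromBlocks_apply₁₁, Matrix.fromBlocks_apply₁₂,
    Matrix.fromBlocks_apply₂₁, Matrix.fromBlocks_apply₂₂, Matrix.hadamard_apply,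
    Matrix.vecMulVec_apply, Matrix.add_apply, Matrix.sub_apply, Matrix.smul_apply,
    Matrix.transpose_apply, smul_eq_mul, Pi.add_apply]
  congr 1
  · rw [← Finset.sum_add_distrib]
    exact Finset.sum_congr rfl fun i _ => by rw [Real.cos_sub]; ring
  · simp only [mul_add, Finset.mul_sum, ← Finset.sum_add_distrib]
    refine Finset.sum_congr rfl fun i _ => ?_
    refine Finset.sum_congr rfl fun j _ => ?_
    rw [hDccSymm.apply i j, hDssSymm.apply i j, Real.cos_sub, Real.cos_sub,
      Real.sin_sub, Real.sin_sub]
    ring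
end

section
/- Let P₀ be a σ-finite measure on a measurable space X, let t : X → ℝⁿ be measurable, let ψ(θ) = ln ∫ exp(θ·t(x)) dP₀(x), and let Θ be an open subset of {θ : ψ(θ) < ∞}. Let F : X → ℝ be a bounded measurable function and define the expected fitness J(θ) = ∫ F(x) dP_θ(x), where P_θ has density exp(θ·t(x) − ψ(θ)) with respect to P₀. Then J is differentiable on Θ, ψ is differentiable on Θ with ∇ψ(θ) = ∫ t dP_θ, and the Euclidean gradient of J is given by ∇J(θ) = ∫ F(x)·(t(x) − ∇ψ(θ)) dP_θ(x). -/
/-!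
The partition function `Z(θ) = ∫ exp ⟪θ, t⟫ dP₀` and the unnormalised fitness
`N(θ) = ∫ F exp ⟪θ, t⟫ dP₀` can be differentiated under the integral sign: near a point of the
open set `Θ`, a ball around it lies in the convex hull of finitely many points `bᵢ ∈ Θ`, so by
convexity of `θ ↦ exp ⟪θ, v⟫` the norm `‖t‖ exp ⟪θ, t⟫` of the θ-derivative is dominated by a
multiple of the integrable function `∑ᵢ exp ⟪bᵢ, t⟫`. Then `ψ = log Z` and `J = exp (-ψ) N`,
and the gradient formulas follow from the chain and product rules.
-/

open MeasureTheory Metric Set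
open scoped RealInnerProductSpace

section InnerProductSpace

variable {E : Type*} [NormedAddCommGroup E] [InnerProductSpace ℝ E]

theorem norm_smul_inv_norm_le {c : ℝ} (hc : 0 ≤ c) (v : E) : ‖(c * ‖v‖⁻¹) • v‖ ≤ c := by
  rcases eq_or_ne v 0 with rfl | hv
  · simpa using hc
  · rw [norm_smul, Real.norm_of_nonneg (by positivity), mul_assoc,
      inv_mul_cancel₀ (norm_ne_zero_iff.2 hv), mul_one]

theorem inner_add_smul_inv_norm (θ v : E) (c : ℝ) :
    ⟪θ + (c * ‖v‖⁻¹) • v, v⟫ = ⟪θ, v⟫ + c * ‖v‖ := by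
  rcases eq_or_ne v 0 with rfl | hv
  · simp
  · rw [inner_add_left, real_inner_smul_left, real_inner_self_eq_norm_sq]
    field_simp

theorem exp_inner_le_sum_of_mem_convexHull {ι : Type*} [Fintype ι] {b : ι → E} {θ : E}
    (hθ : θ ∈ convexHull ℝ (range b)) (v : E) :
    Real.exp ⟪θ, v⟫ ≤ ∑ i, Real.exp ⟪b i, v⟫ := by
  have hconvex : ConvexOn ℝ univ fun θ : E => Real.exp ⟪θ, v⟫ :=
    convexOn_exp.comp_linearMap (innerₛₗ ℝ (E := E) |>.flip v)
  obtain ⟨_, ⟨i, rfl⟩, hi⟩ := hconvex.exists_ge_of_mem_convexHull (subset_univ _) hθ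
  exact hi.trans (Finset.single_le_sum (f := fun j => Real.exp ⟪b j, v⟫)
    (fun j _ => (Real.exp_pos _).le) (Finset.mem_univ i))

variable [CompleteSpace E] {f g : E → ℝ} {f' g' x : E}

theorem HasDerivAt.comp_hasGradientAt {h : ℝ → ℝ} {h' : ℝ} (hh : HasDerivAt h h' (f x))
    (hf : HasGradientAt f f' x) : HasGradientAt (h ∘ f) (h' • f') x := by
  rw [hasGradientAt_iff_hasFDerivAt] at hf ⊢
  simpa [map_smul] using hh.comp_hasFDerivAt x hf

theorem HasGradientAt.mul (hf : HasGradientAt f f' x) (hg : HasGradientAt g g' x) :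
    HasGradientAt (fun y => f y * g y) (f x • g' + g x • f') x := by
  rw [hasGradientAt_iff_hasFDerivAt] at hf hg ⊢
  simpa [map_add, map_smul] using hf.fun_mul hg

theorem hasGradientAt_exp_inner (v θ : E) :
    HasGradientAt (fun θ => Real.exp ⟪θ, v⟫) (Real.exp ⟪θ, v⟫ • v) θ := by
  have h : HasGradientAt (fun θ => ⟪θ, v⟫) v θ := by
    have hfun : (fun θ => ⟪θ, v⟫) = InnerProductSpace.toDual ℝ E v :=
      funext fun θ => by simp [real_inner_comm]
    rw [hasGradientAt_iff_hasFDerivAt, hfun]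
    exact (InnerProductSpace.toDual ℝ E v).hasFDerivAt
  exact (Real.hasDerivAt_exp _).comp_hasGradientAt h

end InnerProductSpace

section Integrals

variable {X : Type*} [MeasurableSpace X] {μ : Measure X}

theorem integral_toDual {F : Type*} [NormedAddCommGroup F] [InnerProductSpace ℝ F]
    [CompleteSpace F] {φ : X → F} (hφ : Integrable φ μ) :
    ∫ x, InnerProductSpace.toDual ℝ F (φ x) ∂μ = InnerProductSpace.toDual ℝ F (∫ x, φ x ∂μ) :=
  (InnerProductSpace.toDual ℝ F).toContinuousLinearEquiv.toContinuousLinearMap.integral_comp_commSL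
    (by simp) hφ

theorem integral_withDensity_ofReal_exp_sub {V : Type*} [NormedAddCommGroup V]
    [NormedSpace ℝ V] {w : X → ℝ} (hw : Measurable w) (c : ℝ) (h : X → V) :
    ∫ x, h x ∂μ.withDensity (fun x => ENNReal.ofReal (Real.exp (w x - c)))
      = Real.exp (-c) • ∫ x, Real.exp (w x) • h x ∂μ := by
  rw [integral_withDensity_eq_integral_toReal_smul (by fun_prop)
    (Filter.Eventually.of_forall fun _ => ENNReal.ofReal_lt_top), ← integral_smul]
  congr 1
  funext x
  rw [ENNReal.toReal_ofReal (Real.exp_pos _).le, smul_smul, ← Real.exp_add, sub_eq_neg_add]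

variable {E : Type*} [NormedAddCommGroup E] [InnerProductSpace ℝ E] {t : X → E}
  {g : X → ℝ} {C : ℝ}

theorem aestronglyMeasurable_mul_exp_inner (hg : AEStronglyMeasurable g μ)
    (ht : AEStronglyMeasurable t μ) (θ : E) :
    AEStronglyMeasurable (fun x => g x * Real.exp ⟪θ, t x⟫) μ :=
  hg.mul (Real.continuous_exp.comp_aestronglyMeasurable (aestronglyMeasurable_const.inner ht))

theorem integrable_mul_exp_inner (hgC : ∀ x, |g x| ≤ C) (hg : AEStronglyMeasurable g μ) {θ : E}
    (hint : Integrable (fun x => Real.exp ⟪θ, t x⟫) μ) :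
    Integrable (fun x => g x * Real.exp ⟪θ, t x⟫) μ :=
  hint.bdd_mul hg (Filter.Eventually.of_forall fun x => (Real.norm_eq_abs _).trans_le (hgC x))

variable [FiniteDimensional ℝ E] {U : Set E} {θ₀ : E}

theorem exists_integrable_bound_norm_mul_exp_inner (hU : U ∈ nhds θ₀)
    (hint : ∀ θ ∈ U, Integrable (fun x => Real.exp ⟪θ, t x⟫) μ) :
    ∃ r > 0, ∃ G : X → ℝ, Integrable G μ ∧
      ∀ θ ∈ ball θ₀ r, ∀ x, ‖t x‖ * Real.exp ⟪θ, t x⟫ ≤ G x := by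
  obtain ⟨b, hθ₀b, hbU⟩ := exists_mem_interior_convexHull_affineBasis hU
  obtain ⟨ε, hε, hball⟩ := Metric.isOpen_iff.1 isOpen_interior θ₀ hθ₀b
  refine ⟨ε / 2, by positivity, fun x => 2 / ε * ∑ i, Real.exp ⟪b i, t x⟫,
    (integrable_finsetSum _ fun i _ =>
      hint _ (hbU (subset_convexHull ℝ _ ⟨i, rfl⟩))).const_mul _, fun θ hθ x => ?_⟩
  -- Moving `θ` by `ε / 2` in the direction of `t x` stays in the hull and adds `ε / 2 * ‖t x‖`.
  set u := θ + (ε / 2 * ‖t x‖⁻¹) • t x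
  have hu : u ∈ convexHull ℝ (range b) := by
    refine interior_subset (hball ?_)
    calc dist u θ₀ ≤ dist u θ + dist θ θ₀ := dist_triangle _ _ _
      _ < ε / 2 + ε / 2 := by
        refine add_lt_add_of_le_of_lt ?_ hθ
        rw [dist_eq_norm, add_sub_cancel_left]
        exact norm_smul_inv_norm_le (by positivity) (t x)
      _ = ε := add_halves ε
  calc ‖t x‖ * Real.exp ⟪θ, t x⟫ = 2 / ε * (ε / 2 * ‖t x‖ * Real.exp ⟪θ, t x⟫) := by
        field_simp
    _ ≤ 2 / ε * (Real.exp (ε / 2 * ‖t x‖) * Real.exp ⟪θ, t x⟫) := by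
        gcongr; linarith [Real.add_one_le_exp (ε / 2 * ‖t x‖)]
    _ = 2 / ε * Real.exp ⟪u, t x⟫ := by
        rw [inner_add_smul_inv_norm, Real.exp_add, mul_comm (Real.exp ⟪θ, t x⟫)]
    _ ≤ _ := mul_le_mul_of_nonneg_left (exp_inner_le_sum_of_mem_convexHull hu (t x))
        (by positivity)

theorem exists_integrable_bound_norm_mul_exp_inner_smul (hgC : ∀ x, |g x| ≤ C)
    (hU : U ∈ nhds θ₀) (hint : ∀ θ ∈ U, Integrable (fun x => Real.exp ⟪θ, t x⟫) μ) :
    ∃ r > 0, ∃ G : X → ℝ, Integrable G μ ∧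
      ∀ θ ∈ ball θ₀ r, ∀ x, ‖(g x * Real.exp ⟪θ, t x⟫) • t x‖ ≤ G x := by
  obtain ⟨r, hr, G, hG, hGbound⟩ := exists_integrable_bound_norm_mul_exp_inner hU hint
  refine ⟨r, hr, fun x => C * G x, hG.const_mul C, fun θ hθ x => ?_⟩
  rw [norm_smul, Real.norm_eq_abs, abs_mul, Real.abs_exp, mul_assoc, mul_comm (Real.exp _)]
  exact mul_le_mul (hgC x) (hGbound θ hθ x) (by positivity) ((abs_nonneg _).trans (hgC x))

theorem integrable_mul_exp_inner_smul (hgC : ∀ x, |g x| ≤ C)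
    (hg : AEStronglyMeasurable g μ) (ht : AEStronglyMeasurable t μ) (hU : U ∈ nhds θ₀)
    (hint : ∀ θ ∈ U, Integrable (fun x => Real.exp ⟪θ, t x⟫) μ) :
    Integrable (fun x => (g x * Real.exp ⟪θ₀, t x⟫) • t x) μ := by
  obtain ⟨r, hr, G, hG, hGbound⟩ := exists_integrable_bound_norm_mul_exp_inner_smul hgC hU hint
  exact hG.mono' ((aestronglyMeasurable_mul_exp_inner hg ht θ₀).smul ht)
    (Filter.Eventually.of_forall (hGbound θ₀ (mem_ball_self hr)))

theorem hasGradientAt_integral_mul_exp_inner (hgC : ∀ x, |g x| ≤ C)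
    (hg : AEStronglyMeasurable g μ) (ht : AEStronglyMeasurable t μ) (hU : U ∈ nhds θ₀)
    (hint : ∀ θ ∈ U, Integrable (fun x => Real.exp ⟪θ, t x⟫) μ) :
    HasGradientAt (fun θ => ∫ x, g x * Real.exp ⟪θ, t x⟫ ∂μ)
      (∫ x, (g x * Real.exp ⟪θ₀, t x⟫) • t x ∂μ) θ₀ := by
  obtain ⟨r, hr, G, hG, hGbound⟩ := exists_integrable_bound_norm_mul_exp_inner_smul hgC hU hint
  have hderiv : ∀ x θ, HasFDerivAt (fun θ => g x * Real.exp ⟪θ, t x⟫)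
      (InnerProductSpace.toDual ℝ E ((g x * Real.exp ⟪θ, t x⟫) • t x)) θ := fun x θ => by
    simpa [mul_smul] using ((hasGradientAt_exp_inner (t x) θ).hasFDerivAt).const_mul (g x)
  rw [hasGradientAt_iff_hasFDerivAt,
    ← integral_toDual (integrable_mul_exp_inner_smul hgC hg ht hU hint)]
  refine hasFDerivAt_integral_of_dominated_of_fderiv_le (ball_mem_nhds θ₀ hr)
    (Filter.Eventually.of_forall (aestronglyMeasurable_mul_exp_inner hg ht))
    (integrable_mul_exp_inner hgC hg (hint θ₀ (mem_of_mem_nhds hU)))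
    ((InnerProductSpace.toDual ℝ E).continuous.comp_aestronglyMeasurable
      ((aestronglyMeasurable_mul_exp_inner hg ht θ₀).smul ht))
    (Filter.Eventually.of_forall fun x θ hθ => ?_) hG
    (Filter.Eventually.of_forall fun x θ _ => hderiv x θ)
  rw [LinearIsometryEquiv.norm_map]
  exact hGbound θ hθ x

theorem hasGradientAt_of_eq_log_integral_exp_inner {ψ : E → ℝ}
    (hψ : ∀ θ, ψ θ = Real.log (∫ x, Real.exp ⟪θ, t x⟫ ∂μ)) (ht : AEStronglyMeasurable t μ)
    (hU : U ∈ nhds θ₀) (hint : ∀ θ ∈ U, Integrable (fun x => Real.exp ⟪θ, t x⟫) μ) :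
    HasGradientAt ψ (Real.exp (-ψ θ₀) • ∫ x, Real.exp ⟪θ₀, t x⟫ • t x ∂μ) θ₀ := by
  rcases eq_zero_or_neZero μ with rfl | hμ
  · simpa [funext hψ] using hasGradientAt_const θ₀ (0 : ℝ)
  have hZpos : 0 < ∫ x, Real.exp ⟪θ₀, t x⟫ ∂μ := integral_exp_pos (hint θ₀ (mem_of_mem_nhds hU))
  have hZ := hasGradientAt_integral_mul_exp_inner (g := 1) (C := 1) (by simp)
    aestronglyMeasurable_const ht hU hint
  simp only [Pi.one_apply, one_mul] at hZ
  rw [hψ θ₀, Real.exp_neg, Real.exp_log hZpos, funext hψ]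
  exact (Real.hasDerivAt_log hZpos.ne').comp_hasGradientAt
    (f := fun θ => ∫ x, Real.exp ⟪θ, t x⟫ ∂μ) hZ

theorem hasGradientAt_exp_neg_mul_integral_mul_exp_inner {ψ : E → ℝ} {m : E}
    (hψ : HasGradientAt ψ m θ₀) (hgC : ∀ x, |g x| ≤ C) (hg : AEStronglyMeasurable g μ)
    (ht : AEStronglyMeasurable t μ) (hU : U ∈ nhds θ₀)
    (hint : ∀ θ ∈ U, Integrable (fun x => Real.exp ⟪θ, t x⟫) μ) :
    HasGradientAt (fun θ => Real.exp (-ψ θ) * ∫ x, g x * Real.exp ⟪θ, t x⟫ ∂μ)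
      (Real.exp (-ψ θ₀) • ∫ x, Real.exp ⟪θ₀, t x⟫ • g x • (t x - m) ∂μ) θ₀ := by
  have hgrad := ((Real.hasDerivAt_exp _).comp _ (hasDerivAt_neg (ψ θ₀))).comp_hasGradientAt
    hψ |>.mul (hasGradientAt_integral_mul_exp_inner hgC hg ht hU hint)
  simp only [Function.comp_def] at hgrad
  have hcentred : ∫ x, Real.exp ⟪θ₀, t x⟫ • g x • (t x - m) ∂μ
      = ∫ x, (g x * Real.exp ⟪θ₀, t x⟫) • t x ∂μ - (∫ x, g x * Real.exp ⟪θ₀, t x⟫ ∂μ) • m := by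
    simp_rw [smul_smul, smul_sub, mul_comm (Real.exp _)]
    rw [integral_sub (integrable_mul_exp_inner_smul hgC hg ht hU hint)
      ((integrable_mul_exp_inner hgC hg (hint θ₀ (mem_of_mem_nhds hU))).smul_const m),
      integral_smul_const]
  rw [hcentred]
  convert hgrad using 1
  module

end Integrals

theorem stmt_4_general {X : Type*} [MeasurableSpace X] (P₀ : Measure X)
    {n : ℕ} (t : X → EuclideanSpace ℝ (Fin n)) (ht : Measurable t)
    (ψ : EuclideanSpace ℝ (Fin n) → ℝ)
    (hψ : ∀ ϑ, ψ ϑ = Real.log (∫ x, Real.exp (⟪ϑ, t x⟫) ∂P₀))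
    (Θ : Set (EuclideanSpace ℝ (Fin n))) (hΘopen : IsOpen Θ)
    (hΘfin : ∀ ϑ ∈ Θ, Integrable (fun x => Real.exp (⟪ϑ, t x⟫)) P₀)
    (F : X → ℝ) (hFmeas : Measurable F) (hFbdd : ∃ C : ℝ, ∀ x, |F x| ≤ C)
    (P : EuclideanSpace ℝ (Fin n) → Measure X)
    (hP : ∀ ϑ, P ϑ = P₀.withDensity (fun x => ENNReal.ofReal (Real.exp (⟪ϑ, t x⟫ - ψ ϑ))))
    (J : EuclideanSpace ℝ (Fin n) → ℝ)
    (hJ : ∀ ϑ, J ϑ = ∫ x, F x ∂(P ϑ)) :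
    ∀ θ ∈ Θ,
      HasGradientAt ψ (∫ x, t x ∂(P θ)) θ ∧
      HasGradientAt J (∫ x, F x • (t x - ∫ y, t y ∂(P θ)) ∂(P θ)) θ := by
  intro θ hθ
  obtain ⟨C, hC⟩ := hFbdd
  have hU : Θ ∈ nhds θ := hΘopen.mem_nhds hθ
  have hw : ∀ ϑ, Measurable fun x => ⟪ϑ, t x⟫ := fun ϑ => by fun_prop
  have hψgrad := hasGradientAt_of_eq_log_integral_exp_inner hψ ht.aestronglyMeasurable hU hΘfin
  have hmean : ∫ x, t x ∂(P θ) = Real.exp (-ψ θ) • ∫ x, Real.exp ⟪θ, t x⟫ • t x ∂P₀ := by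
    rw [hP, integral_withDensity_ofReal_exp_sub (hw θ)]
  have hJeq : J = fun ϑ => Real.exp (-ψ ϑ) * ∫ x, F x * Real.exp ⟪ϑ, t x⟫ ∂P₀ :=
    funext fun ϑ => by
      simp_rw [hJ, hP, integral_withDensity_ofReal_exp_sub (hw ϑ), smul_eq_mul, mul_comm]
  rw [hmean, hJeq, hP θ, integral_withDensity_ofReal_exp_sub (hw θ)]
  exact ⟨hψgrad, hasGradientAt_exp_neg_mul_integral_mul_exp_inner hψgrad hC
    hFmeas.aestronglyMeasurable ht.aestronglyMeasurable hU hΘfin⟩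

/-- Differentiability of the expected fitness for an exponential family: on an open set `Θ`
where the log-partition `ψ(θ) = ln ∫ exp(⟪θ, t x⟫) dP₀` is finite, `ψ` is differentiable
with gradient `∫ t dP_θ`, and `J(θ) = ∫ F dP_θ` (for a bounded measurable `F`) is
differentiable with gradient `∫ F(x)·(t(x) − ∇ψ(θ)) dP_θ(x)`. -/
theorem stmt_4 {X : Type*} [MeasurableSpace X] (P₀ : Measure X) [SigmaFinite P₀]
    {n : ℕ} (t : X → EuclideanSpace ℝ (Fin n)) (ht : Measurable t)
    (ψ : EuclideanSpace ℝ (Fin n) → ℝ)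
    (hψ : ∀ ϑ, ψ ϑ = Real.log (∫ x, Real.exp (⟪ϑ, t x⟫) ∂P₀))
    (Θ : Set (EuclideanSpace ℝ (Fin n))) (hΘopen : IsOpen Θ)
    (hΘfin : ∀ ϑ ∈ Θ, Integrable (fun x => Real.exp (⟪ϑ, t x⟫)) P₀)
    (F : X → ℝ) (hFmeas : Measurable F) (hFbdd : ∃ C : ℝ, ∀ x, |F x| ≤ C)
    (P : EuclideanSpace ℝ (Fin n) → Measure X)
    (hP : ∀ ϑ, P ϑ = P₀.withDensity (fun x => ENNReal.ofReal (Real.exp (⟪ϑ, t x⟫ - ψ ϑ))))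
    (J : EuclideanSpace ℝ (Fin n) → ℝ)
    (hJ : ∀ ϑ, J ϑ = ∫ x, F x ∂(P ϑ)) :
    ∀ θ ∈ Θ,
      HasGradientAt ψ (∫ x, t x ∂(P θ)) θ ∧
      HasGradientAt J (∫ x, F x • (t x - ∫ y, t y ∂(P θ)) ∂(P θ)) θ :=
  stmt_4_general P₀ t ht ψ hψ Θ hΘopen hΘfin F hFmeas hFbdd P hP J hJ
end

section
/- Let a, b, A, B, C ∈ ℝ. Then there exist ν₁, ν₂ ∈ ℝ such that for all θ ∈ ℝ: a·cos θ + b·sin θ + A·cos²θ + B·sin θ·cos θ + C·sin²θ = (A + C)/2 + √(a² + b²)·cos(θ − ν₁) + ½·√((A − C)² + B²)·cos(2(θ − ν₂)). Consequently, each univariate full conditional of the exponential-family extended multivariate von Mises distribution, whose log-density as a function of one angle θ is (up to an additive constant) of the above quadratic trigonometric form, is a generalized von Mises distribution of order two, with density proportional to exp{γ¹·cos(θ − ν¹) + γ²·cos(2(θ − ν²))}. -/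
open Real

/-- The phase is the argument of `x + y i`; `Complex.norm_mul_cos_arg` holds also at `0`. -/
theorem exists_mul_cos_add_mul_sin_eq (x y : ℝ) :
    ∃ φ : ℝ, ∀ θ : ℝ, x * cos θ + y * sin θ = √(x ^ 2 + y ^ 2) * cos (θ - φ) := by
  set z : ℂ := ⟨x, y⟩
  have hnorm : ‖z‖ = √(x ^ 2 + y ^ 2) := by
    rw [Complex.norm_def, Complex.normSq_mk]
    ring_nf
  refine ⟨z.arg, fun θ => ?_⟩
  have hx : ‖z‖ * cos z.arg = x := Complex.norm_mul_cos_arg z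
  have hy : ‖z‖ * sin z.arg = y := Complex.norm_mul_sin_arg z
  rw [cos_sub, ← hnorm, ← hx, ← hy]
  ring

theorem quadratic_form_cos_sin_eq (A B C θ : ℝ) :
    A * cos θ ^ 2 + B * (sin θ * cos θ) + C * sin θ ^ 2 =
      (A + C) / 2 + (1 / 2) * ((A - C) * cos (2 * θ) + B * sin (2 * θ)) := by
  rw [cos_two_mul, sin_two_mul]
  linear_combination C * sin_sq_add_cos_sq θ

/-- Every quadratic trigonometric exponent
`a cos θ + b sin θ + A cos²θ + B sin θ cos θ + C sin²θ` can be written in the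
generalized von Mises (order two) form
`(A+C)/2 + √(a²+b²)·cos(θ − ν₁) + ½√((A−C)²+B²)·cos(2(θ − ν₂))`; hence each univariate
full conditional of the exponential-family extended multivariate von Mises distribution is
a generalized von Mises distribution of order two. -/
theorem stmt_10 (a b A B C : ℝ) :
    ∃ ν₁ ν₂ : ℝ, ∀ θ : ℝ,
      a * Real.cos θ + b * Real.sin θ + A * Real.cos θ ^ 2 +
        B * (Real.sin θ * Real.cos θ) + C * Real.sin θ ^ 2 =
      (A + C) / 2 + Real.sqrt (a ^ 2 + b ^ 2) * Real.cos (θ - ν₁) +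
        (1 / 2) * Real.sqrt ((A - C) ^ 2 + B ^ 2) * Real.cos (2 * (θ - ν₂)) := by
  obtain ⟨ν₁, hfirst⟩ := exists_mul_cos_add_mul_sin_eq a b
  obtain ⟨φ, hsecond⟩ := exists_mul_cos_add_mul_sin_eq (A - C) B
  refine ⟨ν₁, φ / 2, fun θ => ?_⟩
  have hphase : 2 * (θ - φ / 2) = 2 * θ - φ := by ring
  rw [add_assoc (a * cos θ + b * sin θ), add_assoc (a * cos θ + b * sin θ),
    quadratic_form_cos_sin_eq, hsecond, hfirst, hphase]
  ring
end
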